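/- Let A ∈ ℝ^{n×n}, B ∈ ℝ^{n×s}, and suppose for each 1 ≤ j ≤ k, X_j = X_{j-1} + α_{j-1} P_{j-1} + E_{X_j} and R_j = R_{j-1} - α_{j-1} A P_{j-1} - E_{R_j}, where α_{j-1} ∈ ℝ and E_{X_j}, E_{R_j} ∈ ℝ^{n×s} are perturbation matrices. If R_0 = B - A X_0, then (B - A X_k) - R_k = -A (Σ_{j=1}^k E_{X_j}) + Σ_{j=1}^k E_{R_j}, and hence ‖(B - A X_k) - R_k‖_F ≤ ‖A‖ Σ_{j=1}^k ‖E_{X_j}‖_F + Σ_{j=1}^k ‖E_{R_j}‖_F. -/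
import Mathlib


open Matrix Finset

noncomputable def frobInner {n s : ℕ} (X Y : Matrix (Fin n) (Fin s) ℝ) : ℝ :=
  (Xᵀ * Y).trace

noncomputable def frobNorm {n s : ℕ} (X : Matrix (Fin n) (Fin s) ℝ) : ℝ :=
  Real.sqrt (frobInner X X)

attribute [local instance] Matrix.frobeniusSeminormedAddCommGroup

lemma frobNorm_eq {n s : ℕ} (X : Matrix (Fin n) (Fin s) ℝ) : frobNorm X = ‖X‖ := by
  rw [Matrix.frobenius_norm_def, ← Real.sqrt_eq_rpow]
  unfold frobNorm frobInner
  congr 1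
  rw [Finset.sum_comm]
  simp [Matrix.trace, Matrix.mul_apply, Matrix.diag, Real.rpow_two, sq]

theorem stmt_3 {n s : ℕ} (A : Matrix (Fin n) (Fin n) ℝ)
    (B : Matrix (Fin n) (Fin s) ℝ) (k : ℕ)
    (X R P EX ER : ℕ → Matrix (Fin n) (Fin s) ℝ) (α : ℕ → ℝ)
    (hX : ∀ j, 1 ≤ j → j ≤ k → X j = X (j - 1) + α (j - 1) • P (j - 1) + EX j)
    (hR : ∀ j, 1 ≤ j → j ≤ k → R j = R (j - 1) - α (j - 1) • (A * P (j - 1)) - ER j)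
    (hR0 : R 0 = B - A * X 0)
    (nA : ℝ) (hnA : ∀ M : Matrix (Fin n) (Fin s) ℝ, frobNorm (A * M) ≤ nA * frobNorm M) :
    (B - A * X k) - R k = -(A * ∑ j ∈ Finset.Icc 1 k, EX j) + ∑ j ∈ Finset.Icc 1 k, ER j ∧
    frobNorm ((B - A * X k) - R k)
      ≤ nA * ∑ j ∈ Finset.Icc 1 k, frobNorm (EX j) + ∑ j ∈ Finset.Icc 1 k, frobNorm (ER j) := by
  have key : ∀ m, (∀ j, 1 ≤ j → j ≤ m → X j = X (j - 1) + α (j - 1) • P (j - 1) + EX j) →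
      (∀ j, 1 ≤ j → j ≤ m → R j = R (j - 1) - α (j - 1) • (A * P (j - 1)) - ER j) →
      (B - A * X m) - R m = -(A * ∑ j ∈ Finset.Icc 1 m, EX j) + ∑ j ∈ Finset.Icc 1 m, ER j := by
    intro m
    induction m with
    | zero => intro _ _; simp [hR0]
    | succ p ih =>
      intro hX' hR'
      have h1 := hX' (p+1) (by omega) le_rfl
      have h2 := hR' (p+1) (by omega) le_rfl
      simp only [Nat.add_sub_cancel] at h1 h2
      have ihp := ih (fun j a b => hX' j a (by omega)) (fun j a b => hR' j a (by omega))
      rw [Finset.sum_Icc_succ_top (by omega : 1 ≤ p+1),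
          Finset.sum_Icc_succ_top (by omega : 1 ≤ p+1)]
      have e : (B - A * X (p+1)) - R (p+1)
          = ((B - A * X p) - R p) + (-(A * EX (p+1)) + ER (p+1)) := by
        rw [h1, h2]
        simp only [Matrix.mul_add, Matrix.mul_smul]
        abel
      rw [e, ihp, Matrix.mul_add]
      abel
  refine ⟨key k hX hR, ?_⟩
  rw [key k hX hR]
  simp only [frobNorm_eq] at hnA ⊢
  calc ‖-(A * ∑ j ∈ Finset.Icc 1 k, EX j) + ∑ j ∈ Finset.Icc 1 k, ER j‖
      ≤ ‖A * ∑ j ∈ Finset.Icc 1 k, EX j‖ + ‖∑ j ∈ Finset.Icc 1 k, ER j‖ := by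
        rw [← norm_neg (A * _)] at *; exact norm_add_le _ _
    _ ≤ (∑ j ∈ Finset.Icc 1 k, nA * ‖EX j‖) + ∑ j ∈ Finset.Icc 1 k, ‖ER j‖ := by
        gcongr
        · calc ‖A * ∑ j ∈ Finset.Icc 1 k, EX j‖
              = ‖∑ j ∈ Finset.Icc 1 k, A * EX j‖ := by rw [Matrix.mul_sum]
            _ ≤ ∑ j ∈ Finset.Icc 1 k, ‖A * EX j‖ := norm_sum_le _ _
            _ ≤ ∑ j ∈ Finset.Icc 1 k, nA * ‖EX j‖ := by
                exact Finset.sum_le_sum fun j _ => hnA (EX j)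
        · exact norm_sum_le _ _
    _ = nA * ∑ j ∈ Finset.Icc 1 k, ‖EX j‖ + ∑ j ∈ Finset.Icc 1 k, ‖ER j‖ := by
        rw [Finset.mul_sum]
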